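/- arXiv:2511.00228 — 10 statements merged into one kernel-verified Lean document; each statement's English description precedes it below -/
import Mathlib

section
/- Let ι be a finite type, let V be a finite set of functions from ι to ℝ, and let B : ι → ℝ. Then B lies in the convex hull (over ℝ) of V if and only if there is no Dutch book against B, i.e., if and only if there is no stake function s : ι → ℝ such that ∑ i, s i * (v i − B i) < 0 for every v ∈ V. -/
/-! A stake vector `s` is a Dutch book against `B` exactly when the linear functional `s ⬝ᵥ ·`
is strictly below its value at `B` on all of `V`. If `B` lies in the convex hull, such a
functional cannot exist, since a linear function on a convex hull is maximised at a point of `V`.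
If `B` does not, Hahn–Banach strictly separates `B` from the closed convex set `convexHull ℝ V`,
and the separating functional is a dot product. -/

open Matrix

theorem exists_dotProduct_lt_of_notMem_of_isClosed {ι : Type*} [Fintype ι] {C : Set (ι → ℝ)}
    (hconv : Convex ℝ C) (hclosed : IsClosed C) {B : ι → ℝ} (hB : B ∉ C) :
    ∃ s : ι → ℝ, ∀ v ∈ C, s ⬝ᵥ v < s ⬝ᵥ B := by
  classical
  obtain ⟨f, u, hfC, hfB⟩ := geometric_hahn_banach_closed_point hconv hclosed hB
  have hf : ∀ x, (dotProductEquiv ℝ ι).symm f.toLinearMap ⬝ᵥ x = f x := fun x =>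
    LinearMap.congr_fun ((dotProductEquiv ℝ ι).apply_symm_apply f.toLinearMap) x
  exact ⟨_, fun v hv => by rw [hf, hf]; exact (hfC v hv).trans hfB⟩

theorem exists_dotProduct_le_of_mem_convexHull {ι : Type*} [Fintype ι] {V : Set (ι → ℝ)}
    {B : ι → ℝ} (hB : B ∈ convexHull ℝ V) (s : ι → ℝ) : ∃ v ∈ V, s ⬝ᵥ B ≤ s ⬝ᵥ v :=
  ((dotProductBilin ℝ ℝ s).convexOn convex_univ).exists_ge_of_mem_convexHull
    (Set.subset_univ V) hB

theorem no_dutch_book_iff_convex_combination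
    {ι : Type*} [Fintype ι] (V : Set (ι → ℝ)) (hV : V.Finite) (B : ι → ℝ) :
    B ∈ convexHull ℝ V ↔
      ¬ ∃ s : ι → ℝ, ∀ v ∈ V, (∑ i, s i * (v i - B i)) < 0 := by
  have payoff (s v : ι → ℝ) : ∑ i, s i * (v i - B i) = s ⬝ᵥ v - s ⬝ᵥ B := dotProduct_sub s v B
  simp only [payoff, sub_neg, not_exists, not_forall, not_lt, exists_prop]
  refine ⟨fun hB s => exists_dotProduct_le_of_mem_convexHull hB s, fun h => ?_⟩
  by_contra hB
  obtain ⟨s, hs⟩ := exists_dotProduct_lt_of_notMem_of_isClosed (convex_convexHull ℝ V)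
    (hV.isClosed_convexHull ℝ) hB
  obtain ⟨v, hv, hle⟩ := h s
  exact (hs v (subset_convexHull ℝ V hv)).not_ge hle
end

section
/- Let ι be a finite type, let V be a finite set of functions from ι to ℝ, and let B : ι → ℝ. Then there is no Dutch book against B (no stake function s : ι → ℝ with ∑ i, s i * (v i − B i) < 0 for every v ∈ V) if and only if B satisfies every linear formal inequality satisfied by all members of V; that is, if and only if for every x : ι → ℝ and c : ℝ with c ≤ ∑ i, x i * v i for all v ∈ V, also c ≤ ∑ i, x i * B i. -/
theorem no_dutch_book_iff_formal_inequalities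
    {ι : Type*} [Fintype ι] (V : Set (ι → ℝ)) (hV : V.Finite) (B : ι → ℝ) :
    (¬ ∃ s : ι → ℝ, ∀ v ∈ V, (∑ i, s i * (v i - B i)) < 0) ↔
      ∀ (x : ι → ℝ) (c : ℝ),
        (∀ v ∈ V, c ≤ ∑ i, x i * v i) → c ≤ ∑ i, x i * B i := by
  constructor
  · intro h x c hx
    by_contra hc
    push_neg at hc
    apply h
    refine ⟨fun i => -x i, fun v hv => ?_⟩
    have key : ∑ i, (-x i) * (v i - B i) = (∑ i, x i * B i) - ∑ i, x i * v i := by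
      rw [← Finset.sum_sub_distrib]
      congr 1; ext i; ring
    rw [key]
    linarith [hx v hv]
  · rintro h ⟨s, hs⟩
    rcases V.eq_empty_or_nonempty with rfl | ⟨v₀, hv₀⟩
    · have := h 0 1 (by simp)
      simp at this
      linarith
    · set F := hV.toFinset with hF
      have hFne : F.Nonempty := ⟨v₀, by simp [hF, hv₀]⟩
      set c := (F.image (fun v => ∑ i, (-s i) * v i)).min' (hFne.image _) with hc
      have hcle : ∀ v ∈ V, c ≤ ∑ i, (-s i) * v i := by
        intro v hv
        apply Finset.min'_le
        exact Finset.mem_image_of_mem _ (by simp [hF, hv])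
      obtain ⟨w, hwF, hw⟩ := Finset.mem_image.mp ((F.image (fun v => ∑ i, (-s i) * v i)).min'_mem (hFne.image _))
      have hwV : w ∈ V := by simpa [hF] using hwF
      have h1 := h (fun i => -s i) c hcle
      have key : ∀ v : ι → ℝ, ∑ i, s i * (v i - B i) = (∑ i, s i * v i) - ∑ i, s i * B i := by
        intro v
        rw [← Finset.sum_sub_distrib]
        congr 1; ext i; ring
      have h2 := hs w hwV
      rw [key w] at h2
      have e1 : ∑ i, (fun i => -s i) i * B i = -∑ i, s i * B i := by
        simp [neg_mul, Finset.sum_neg_distrib]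
      have e2 : ∑ i, (-s i) * w i = -∑ i, s i * w i := by
        simp [neg_mul, Finset.sum_neg_distrib]
      rw [e1] at h1
      rw [e2] at hw
      rw [← hc] at hw; linarith
end

section
/- Let ι be a finite type and let V be a finite set of functions from ι to ℝ. Then there exist n : ℕ, coefficient vectors x : Fin n → (ι → ℝ), and constants c : Fin n → ℝ such that for every b : ι → ℝ, b lies in the convex hull (over ℝ) of V if and only if c j ≤ ∑ i, (x j) i * b i for every j : Fin n. In other words, the convex hull of a finite set of points in ℝ^ι is the intersection of finitely many closed half-spaces. -/
open Finset


lemma fm_core {γ : Type*} (A : Finset γ) (a c v : γ → ℝ) :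
    (∃ t : ℝ, ∀ p ∈ A, c p ≤ a p * t + v p) ↔
      ((∀ p ∈ A, a p = 0 → c p ≤ v p) ∧
       ∀ p ∈ A, ∀ q ∈ A, 0 < a p → a q < 0 →
         (-a q) * c p + a p * c q ≤ (-a q) * v p + a p * v q) := by
  classical
  constructor
  · rintro ⟨t, ht⟩
    refine ⟨fun p hp h0 => by have := ht p hp; simp [h0] at this; linarith, ?_⟩
    intro p hp q hq hap haq
    have h1 := ht p hp; have h2 := ht q hq
    nlinarith
  · rintro ⟨h0, hpq⟩
    by_cases hP : (A.filter fun p => 0 < a p).Nonempty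
    · refine ⟨(A.filter fun p => 0 < a p).sup' hP (fun p => (c p - v p) / a p), ?_⟩
      intro p hp
      rcases lt_trichotomy (a p) 0 with h | h | h
      · have hub : ((A.filter fun p => 0 < a p).sup' hP (fun p => (c p - v p) / a p))
            ≤ (c p - v p) / a p := by
          apply Finset.sup'_le
          intro q hq
          rw [Finset.mem_filter] at hq
          have hq2 := hq.2
          have hneg : (0:ℝ) < -a p := by linarith
          rw [show (c p - v p) / a p = (v p - c p) / (-a p) by
            rw [div_eq_div_iff (ne_of_lt h) (ne_of_gt hneg)]; ring]
          rw [div_le_div_iff₀ hq2 hneg]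
          nlinarith [hpq q hq.1 p hp hq2 h]
        have key : a p * ((c p - v p) / a p) = c p - v p := mul_div_cancel₀ _ (ne_of_lt h)
        have := mul_le_mul_of_nonpos_left hub (le_of_lt h)
        rw [key] at this
        linarith
      · have := h0 p hp h; simp [h]; linarith
      · have hlb : (c p - v p) / a p ≤
            (A.filter fun p => 0 < a p).sup' hP (fun p => (c p - v p) / a p) :=
          Finset.le_sup' (f := fun p => (c p - v p) / a p) (Finset.mem_filter.mpr ⟨hp, h⟩)
        rw [div_le_iff₀ h] at hlb
        nlinarith [hlb]
    · by_cases hN : (A.filter fun p => a p < 0).Nonempty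
      · refine ⟨(A.filter fun p => a p < 0).inf' hN (fun p => (c p - v p) / a p), ?_⟩
        intro p hp
        rcases lt_trichotomy (a p) 0 with h | h | h
        · have hub : ((A.filter fun p => a p < 0).inf' hN (fun p => (c p - v p) / a p))
              ≤ (c p - v p) / a p := Finset.inf'_le (f := fun p => (c p - v p) / a p) (Finset.mem_filter.mpr ⟨hp, h⟩)
          have key : a p * ((c p - v p) / a p) = c p - v p := mul_div_cancel₀ _ (ne_of_lt h)
          have := mul_le_mul_of_nonpos_left hub (le_of_lt h)
          rw [key] at this
          linarith
        · have := h0 p hp h; simp [h]; linarith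
        · exact absurd ⟨p, Finset.mem_filter.mpr ⟨hp, h⟩⟩ hP
      · refine ⟨0, fun p hp => ?_⟩
        have h1 : ¬ 0 < a p := fun h => hP ⟨p, Finset.mem_filter.mpr ⟨hp, h⟩⟩
        have h2 : ¬ a p < 0 := fun h => hN ⟨p, Finset.mem_filter.mpr ⟨hp, h⟩⟩
        have : a p = 0 := le_antisymm (not_lt.mp h1) (not_lt.mp h2)
        have := h0 p hp this
        simp [‹a p = 0›]
        linarith


lemma comb_eval {κ : Type*} [Fintype κ] (α β : ℝ) (u v w : κ → ℝ) :
    ∑ i, (α * u i + β * v i) * w i = α * ∑ i, u i * w i + β * ∑ i, v i * w i := by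
  simp [add_mul, Finset.sum_add_distrib, Finset.mul_sum, mul_assoc]

lemma proj {ι : Type*} [Fintype ι] (m : ℕ) :
    ∀ (A : Finset (((Fin m → ℝ) × (ι → ℝ)) × ℝ)),
      ∃ B : Finset ((ι → ℝ) × ℝ), ∀ b : ι → ℝ,
        (∃ w : Fin m → ℝ, ∀ p ∈ A, p.2 ≤ (∑ k, p.1.1 k * w k) + ∑ i, p.1.2 i * b i) ↔
        ∀ q ∈ B, q.2 ≤ ∑ i, q.1 i * b i := by
  classical
  induction m with
  | zero =>
    intro A
    refine ⟨A.image fun p => (p.1.2, p.2), fun b => ?_⟩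
    constructor
    · rintro ⟨w, hw⟩ q hq
      rw [Finset.mem_image] at hq
      obtain ⟨p, hp, rfl⟩ := hq
      simpa using hw p hp
    · intro h
      refine ⟨fun k => k.elim0, fun p hp => ?_⟩
      have := h (p.1.2, p.2) (Finset.mem_image.mpr ⟨p, hp, rfl⟩)
      simpa using this
  | succ m ih =>
    intro A
    set A' : Finset (((Fin m → ℝ) × (ι → ℝ)) × ℝ) :=
      ((A.filter fun p => p.1.1 0 = 0).image fun p =>
        (((fun k => p.1.1 k.succ), p.1.2), p.2)) ∪
      (((A.filter fun p => 0 < p.1.1 0) ×ˢ (A.filter fun p => p.1.1 0 < 0)).image fun pq =>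
        (((fun k => (-pq.2.1.1 0) * pq.1.1.1 k.succ + pq.1.1.1 0 * pq.2.1.1 k.succ),
          fun i => (-pq.2.1.1 0) * pq.1.1.2 i + pq.1.1.1 0 * pq.2.1.2 i),
          (-pq.2.1.1 0) * pq.1.2 + pq.1.1.1 0 * pq.2.2)) with hA'def
    obtain ⟨B, hB⟩ := ih A'
    refine ⟨B, fun b => ?_⟩
    rw [← hB b]
    -- key: for fixed w', A' constraints ↔ fm_core RHS
    have key : ∀ w' : Fin m → ℝ,
        (∀ q ∈ A', q.2 ≤ (∑ k, q.1.1 k * w' k) + ∑ i, q.1.2 i * b i) ↔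
        ((∀ p ∈ A, p.1.1 0 = 0 →
            p.2 ≤ (∑ k : Fin m, p.1.1 k.succ * w' k) + ∑ i, p.1.2 i * b i) ∧
         ∀ p ∈ A, ∀ q ∈ A, 0 < p.1.1 0 → q.1.1 0 < 0 →
           (-q.1.1 0) * p.2 + p.1.1 0 * q.2 ≤
             (-q.1.1 0) * ((∑ k : Fin m, p.1.1 k.succ * w' k) + ∑ i, p.1.2 i * b i)
             + p.1.1 0 * ((∑ k : Fin m, q.1.1 k.succ * w' k) + ∑ i, q.1.2 i * b i)) := by
      intro w'
      constructor
      · intro h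
        constructor
        · intro p hp h0
          exact h _ (Finset.mem_union_left _ (Finset.mem_image.mpr
            ⟨p, Finset.mem_filter.mpr ⟨hp, h0⟩, rfl⟩))
        · intro p hp q hq hp0 hq0
          have := h _ (Finset.mem_union_right _ (Finset.mem_image.mpr
            ⟨(p, q), Finset.mem_product.mpr ⟨Finset.mem_filter.mpr ⟨hp, hp0⟩,
              Finset.mem_filter.mpr ⟨hq, hq0⟩⟩, rfl⟩))
          simp only [comb_eval] at this
          linarith [this]
      · rintro ⟨h1, h2⟩ q hq
        rw [hA'def, Finset.mem_union] at hq
        rcases hq with hq | hq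
        · rw [Finset.mem_image] at hq
          obtain ⟨p, hp, rfl⟩ := hq
          rw [Finset.mem_filter] at hp
          exact h1 p hp.1 hp.2
        · rw [Finset.mem_image] at hq
          obtain ⟨⟨p, q⟩, hpq, rfl⟩ := hq
          rw [Finset.mem_product, Finset.mem_filter, Finset.mem_filter] at hpq
          have := h2 p hpq.1.1 q hpq.2.1 hpq.1.2 hpq.2.2
          simp only [comb_eval]
          linarith [this]
    constructor
    · rintro ⟨w, hw⟩
      refine ⟨fun k => w k.succ, (key _).mpr ?_⟩
      rw [← fm_core A (fun p => p.1.1 0) (fun p => p.2)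
        (fun p => (∑ k : Fin m, p.1.1 k.succ * w k.succ) + ∑ i, p.1.2 i * b i)]
      refine ⟨w 0, fun p hp => ?_⟩
      have := hw p hp
      rw [Fin.sum_univ_succ] at this
      linarith [this]
    · rintro ⟨w', hw'⟩
      have := (fm_core A (fun p => p.1.1 0) (fun p => p.2)
        (fun p => (∑ k : Fin m, p.1.1 k.succ * w' k) + ∑ i, p.1.2 i * b i)).mpr
        ((key w').mp hw')
      obtain ⟨t, ht⟩ := this
      refine ⟨Fin.cons t w', fun p hp => ?_⟩
      have := ht p hp
      rw [Fin.sum_univ_succ]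
      simp only [Fin.cons_zero, Fin.cons_succ]
      linarith [this]


lemma mem_hull_range_iff {ι : Type*} [Fintype ι] {m : ℕ} (v : Fin m → ι → ℝ) (b : ι → ℝ) :
    b ∈ convexHull ℝ (Set.range v) ↔
      ∃ w : Fin m → ℝ, (∀ k, 0 ≤ w k) ∧ (∑ k, w k = 1) ∧ ∀ i, ∑ k, w k * v k i = b i := by
  classical
  rw [convexHull_range_eq_exists_affineCombination]
  constructor
  · rintro ⟨s, w, h0, h1, rfl⟩
    refine ⟨fun k => if k ∈ s then w k else 0, fun k => ?_, ?_, ?_⟩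
    · by_cases h : k ∈ s <;> simp [h]
      exact h0 _ h
    · simp only
      rw [Finset.sum_ite_mem, Finset.univ_inter]; exact h1
    · intro i
      rw [affineCombination_eq_linear_combination s v w h1, Finset.sum_apply]
      simp only [ite_mul, zero_mul]
      rw [Finset.sum_ite_mem, Finset.univ_inter]
      simp [smul_eq_mul]
  · rintro ⟨w, h0, h1, hb⟩
    refine ⟨Finset.univ, w, fun k _ => h0 k, h1, ?_⟩
    rw [affineCombination_eq_linear_combination _ v w h1]
    funext i
    rw [Finset.sum_apply]
    simpa [smul_eq_mul] using hb i

lemma single_dot {κ : Type*} [Fintype κ] [DecidableEq κ] (k0 : κ) (w : κ → ℝ) :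
    ∑ k, (Pi.single k0 (1:ℝ) : κ → ℝ) k * w k = w k0 := by
  simp [Pi.single_apply, ite_mul]

theorem convex_hull_eq_finite_intersection_of_halfspaces
    {ι : Type*} [Fintype ι] (V : Set (ι → ℝ)) (hV : V.Finite) :
    ∃ (n : ℕ) (x : Fin n → ι → ℝ) (c : Fin n → ℝ),
      ∀ b : ι → ℝ,
        b ∈ convexHull ℝ V ↔ ∀ j : Fin n, c j ≤ ∑ i, x j i * b i := by
  classical
  obtain ⟨m, f, hf⟩ := hV.fin_embedding
  set v : Fin m → ι → ℝ := fun k => f k with hv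
  have hVr : V = Set.range v := hf.symm
  set r1 : Fin m → ((Fin m → ℝ) × (ι → ℝ)) × ℝ :=
    fun k => ((Pi.single k (1:ℝ), (0 : ι → ℝ)), (0:ℝ)) with hr1
  set e1 : ((Fin m → ℝ) × (ι → ℝ)) × ℝ :=
    (((fun _ => 1 : Fin m → ℝ), (0 : ι → ℝ)), (1:ℝ)) with he1
  set e2 : ((Fin m → ℝ) × (ι → ℝ)) × ℝ :=
    (((fun _ => -1 : Fin m → ℝ), (0 : ι → ℝ)), (-1:ℝ)) with he2
  set r3 : ι → ((Fin m → ℝ) × (ι → ℝ)) × ℝ :=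
    fun i0 => (((fun k => v k i0), -Pi.single i0 (1:ℝ)), (0:ℝ)) with hr3
  set r4 : ι → ((Fin m → ℝ) × (ι → ℝ)) × ℝ :=
    fun i0 => (((fun k => -(v k i0)), Pi.single i0 (1:ℝ)), (0:ℝ)) with hr4
  set A₀ : Finset (((Fin m → ℝ) × (ι → ℝ)) × ℝ) :=
    ((univ.image r1 ∪ {e1, e2}) ∪ univ.image r3) ∪ univ.image r4 with hA₀
  have key : ∀ (w : Fin m → ℝ) (b : ι → ℝ),
      (∀ p ∈ A₀, p.2 ≤ (∑ k, p.1.1 k * w k) + ∑ i, p.1.2 i * b i) ↔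
      ((∀ k, 0 ≤ w k) ∧ (∑ k, w k = 1) ∧ ∀ i0, ∑ k, w k * v k i0 = b i0) := by
    intro w b
    have hc : ∀ i0, ∑ k, w k * v k i0 = ∑ k, v k i0 * w k :=
      fun i0 => Finset.sum_congr rfl fun k _ => mul_comm _ _
    constructor
    · intro h
      have H1 : ∀ k, 0 ≤ w k := by
        intro k
        have := h (r1 k) (Finset.mem_union_left _ (Finset.mem_union_left _
          (Finset.mem_union_left _ (Finset.mem_image_of_mem r1 (Finset.mem_univ k)))))
        simpa [hr1, single_dot] using this
      have He1 := h e1 (Finset.mem_union_left _ (Finset.mem_union_left _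
        (Finset.mem_union_right _ (Finset.mem_insert_self _ _))))
      have He2 := h e2 (Finset.mem_union_left _ (Finset.mem_union_left _
        (Finset.mem_union_right _ (Finset.mem_insert_of_mem (Finset.mem_singleton_self _)))))
      simp only [he1, he2, one_mul, neg_one_mul, Pi.zero_apply, zero_mul,
        Finset.sum_const_zero, add_zero, Finset.sum_neg_distrib] at He1 He2
      refine ⟨H1, by linarith, fun i0 => ?_⟩
      have H3 := h (r3 i0) (Finset.mem_union_left _ (Finset.mem_union_right _
        (Finset.mem_image_of_mem r3 (Finset.mem_univ i0))))
      have H4 := h (r4 i0) (Finset.mem_union_right _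
        (Finset.mem_image_of_mem r4 (Finset.mem_univ i0)))
      simp only [hr3, hr4, Pi.neg_apply, neg_mul, Finset.sum_neg_distrib, single_dot] at H3 H4
      rw [hc i0]
      linarith
    · rintro ⟨h0, h1, h2⟩ p hp
      rw [hA₀] at hp
      simp only [Finset.mem_union, Finset.mem_image, Finset.mem_univ, true_and,
        Finset.mem_insert, Finset.mem_singleton] at hp
      rcases hp with ((⟨k, rfl⟩ | (rfl | rfl)) | ⟨i0, rfl⟩) | ⟨i0, rfl⟩
      · simpa [hr1, single_dot] using h0 k
      · simp [he1, h1]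
      · simp [he2, h1, Finset.sum_neg_distrib]
      · have := h2 i0
        rw [hc i0] at this
        simp only [hr3, Pi.neg_apply, neg_mul, Finset.sum_neg_distrib, single_dot]
        linarith
      · have := h2 i0
        rw [hc i0] at this
        simp only [hr4, neg_mul, Finset.sum_neg_distrib, single_dot]
        linarith
  obtain ⟨B, hB⟩ := proj m A₀
  have main : ∀ b : ι → ℝ, b ∈ convexHull ℝ V ↔ ∀ q ∈ B, q.2 ≤ ∑ i, q.1 i * b i := by
    intro b
    rw [hVr, mem_hull_range_iff, ← hB b]
    exact exists_congr fun w => (key w b).symm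
  refine ⟨B.card, fun j => ((B.equivFin.symm j : ↥B) : (ι → ℝ) × ℝ).1,
    fun j => ((B.equivFin.symm j : ↥B) : (ι → ℝ) × ℝ).2, fun b => ?_⟩
  rw [main b]
  constructor
  · intro h j
    exact h _ (B.equivFin.symm j).2
  · intro h q hq
    have := h (B.equivFin ⟨q, hq⟩)
    simpa using this
end

section
/- Let ι be a finite type and let V be a finite set of functions from ι to ℝ. Then there exist n : ℕ, coefficient vectors x : Fin n → (ι → ℝ), and constants c : Fin n → ℝ such that (1) every v ∈ V satisfies all the inequalities, i.e., c j ≤ ∑ i, (x j) i * v i for all j and all v ∈ V, and (2) for every B : ι → ℝ, there is no Dutch book against B (no s : ι → ℝ with ∑ i, s i * (v i − B i) < 0 for every v ∈ V) if and only if c j ≤ ∑ i, (x j) i * B i for every j : Fin n. That is, finitely many linear formal inequalities, each valid on all of V, axiomatize the absence of a Dutch book. -/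
open Finset

/-- inner product on `κ → ℝ` as a plain sum -/
noncomputable def ipx {κ : Type*} [Fintype κ] (a x : κ → ℝ) : ℝ := ∑ i, a i * x i

lemma ipx_add {κ : Type*} [Fintype κ] (a y z : κ → ℝ) :
    ipx a (y + z) = ipx a y + ipx a z := by
  simp [ipx, mul_add, Finset.sum_add_distrib]

lemma ipx_smul {κ : Type*} [Fintype κ] (a : κ → ℝ) (t : ℝ) (v : κ → ℝ) :
    ipx a (t • v) = t * ipx a v := by
  simp only [ipx, Pi.smul_apply, smul_eq_mul, Finset.mul_sum]
  exact Finset.sum_congr rfl fun i _ => by ring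

lemma ipx_zero_left {κ : Type*} [Fintype κ] (x : κ → ℝ) : ipx 0 x = 0 := by
  simp [ipx]

lemma ipx_zero_right {κ : Type*} [Fintype κ] (a : κ → ℝ) : ipx a 0 = 0 := by
  simp [ipx]

lemma ipx_sub_smul {κ : Type*} [Fintype κ] (c d : ℝ) (a b x : κ → ℝ) :
    ipx (c • b - d • a) x = c * ipx b x - d * ipx a x := by
  simp [ipx, Finset.mul_sum, ← Finset.sum_sub_distrib]
  congr 1; funext i; ring

lemma ipx_sub_smul_right {κ : Type*} [Fintype κ] (a x v : κ → ℝ) (t : ℝ) :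
    ipx a (x - t • v) = ipx a x - t * ipx a v := by
  simp [ipx, Finset.mul_sum, ← Finset.sum_sub_distrib]
  congr 1; funext i; ring

lemma ipx_single {κ : Type*} [Fintype κ] [DecidableEq κ] (i : κ) (c : ℝ) (x : κ → ℝ) :
    ipx (Pi.single i c) x = c * x i := by
  simp [ipx, Pi.single_apply, ite_mul]

/-- membership in the cone generated by a list of vectors -/
def coneMem {κ : Type*} [Fintype κ] : List (κ → ℝ) → (κ → ℝ) → Prop
  | [], x => x = 0
  | v :: L, x => ∃ t : ℝ, 0 ≤ t ∧ ∃ y, coneMem L y ∧ x = y + t • v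

lemma coneMem_zero {κ : Type*} [Fintype κ] (L : List (κ → ℝ)) : coneMem L 0 := by
  induction L with
  | nil => rfl
  | cons v L ih => exact ⟨0, le_refl 0, 0, ih, by simp⟩

lemma coneMem_cons {κ : Type*} [Fintype κ] (v : κ → ℝ) (L : List (κ → ℝ)) (x : κ → ℝ)
    (h : coneMem L x) : coneMem (v :: L) x :=
  ⟨0, le_refl 0, x, h, by simp⟩

lemma coneMem_mem {κ : Type*} [Fintype κ] (L : List (κ → ℝ)) (u : κ → ℝ) (h : u ∈ L) :
    coneMem L u := by
  induction L with
  | nil => simp at h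
  | cons v L ih =>
    rcases List.mem_cons.mp h with rfl | h
    · exact ⟨1, zero_le_one, 0, coneMem_zero L, by simp⟩
    · exact coneMem_cons _ _ _ (ih h)

lemma foldr_max_nonneg (l : List ℝ) : 0 ≤ l.foldr max 0 := by
  induction l with
  | nil => simp
  | cons r l ih => exact le_trans ih (le_max_right _ _)

lemma le_foldr_max (l : List ℝ) (r : ℝ) (h : r ∈ l) : r ≤ l.foldr max 0 := by
  induction l with
  | nil => simp at h
  | cons s l ih =>
    rcases List.mem_cons.mp h with rfl | h
    · exact le_max_left _ _
    · exact le_trans (ih h) (le_max_right _ _)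

lemma foldr_max_le (l : List ℝ) (c : ℝ) (h0 : 0 ≤ c) (h : ∀ r ∈ l, r ≤ c) :
    l.foldr max 0 ≤ c := by
  induction l with
  | nil => simpa
  | cons r l ih =>
    exact max_le (h r (List.mem_cons_self)) (ih fun s hs => h s (List.mem_cons_of_mem _ hs))

/-- Weyl: a finitely generated cone is a finite intersection of halfspaces. -/
lemma exists_poly {κ : Type*} [Fintype κ] (L : List (κ → ℝ)) :
    ∃ A : List (κ → ℝ), ∀ x, coneMem L x ↔ ∀ a ∈ A, ipx a x ≤ 0 := by
  classical
  induction L with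
  | nil =>
    refine ⟨(Finset.univ.toList.map fun i => Pi.single i (1:ℝ)) ++
            (Finset.univ.toList.map fun i => Pi.single i (-1:ℝ)), fun x => ?_⟩
    constructor
    · rintro rfl a ha
      rcases List.mem_append.mp ha with ha | ha <;>
        · obtain ⟨i, _, rfl⟩ := List.mem_map.mp ha
          simp [ipx_single]
    · intro h
      funext i
      have h1 := h (Pi.single i (1:ℝ))
        (List.mem_append.mpr (Or.inl (List.mem_map.mpr ⟨i, by simp [Finset.mem_toList], rfl⟩)))
      have h2 := h (Pi.single i (-1:ℝ))
        (List.mem_append.mpr (Or.inr (List.mem_map.mpr ⟨i, by simp [Finset.mem_toList], rfl⟩)))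
      rw [ipx_single] at h1 h2
      have : x i = 0 := by linarith
      simpa using this
  | cons v L ih =>
    obtain ⟨A, hA⟩ := ih
    refine ⟨(A.map fun a => if ipx a v ≤ 0 then a else 0) ++
        (A.flatMap fun a => A.map fun b =>
          if 0 < ipx a v ∧ ipx b v < 0 then (ipx a v) • b - (ipx b v) • a else 0), fun x => ?_⟩
    constructor
    · rintro ⟨t, ht, y, hy, rfl⟩
      have hy' := (hA y).mp hy
      intro a ha
      rcases List.mem_append.mp ha with ha | ha
      · obtain ⟨b, hb, rfl⟩ := List.mem_map.mp ha
        by_cases hbv : ipx b v ≤ 0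
        · rw [if_pos hbv, ipx_add, ipx_smul]
          have h1 := hy' b hb
          nlinarith [mul_le_mul_of_nonneg_left hbv ht]
        · rw [if_neg hbv, ipx_zero_left]
      · obtain ⟨a1, ha1, ha2⟩ := List.mem_flatMap.mp ha
        obtain ⟨b1, hb1, rfl⟩ := List.mem_map.mp ha2
        by_cases hc : 0 < ipx a1 v ∧ ipx b1 v < 0
        · rw [if_pos hc, ipx_add, ipx_smul, ipx_sub_smul, ipx_sub_smul]
          have h1 := hy' a1 ha1
          have h2 := hy' b1 hb1
          have e1 : ipx a1 v * ipx b1 y ≤ ipx a1 v * 0 :=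
            mul_le_mul_of_nonneg_left h2 hc.1.le
          have e2 : (-(ipx b1 v)) * ipx a1 y ≤ (-(ipx b1 v)) * 0 :=
            mul_le_mul_of_nonneg_left h1 (by linarith [hc.2])
          nlinarith [e1, e2]
        · rw [if_neg hc, ipx_zero_left]
    · intro h
      have hz : ∀ a ∈ A, ipx a v ≤ 0 → ipx a x ≤ 0 := by
        intro a ha hav
        exact h a (List.mem_append.mpr (Or.inl (List.mem_map.mpr ⟨a, ha, if_pos hav⟩)))
      have hpair : ∀ a ∈ A, ∀ b ∈ A, 0 < ipx a v → ipx b v < 0 →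
          ipx a v * ipx b x - ipx b v * ipx a x ≤ 0 := by
        intro a ha b hb h1 h2
        have hmem := h _ (List.mem_append.mpr (Or.inr (List.mem_flatMap.mpr
          ⟨a, ha, List.mem_map.mpr ⟨b, hb, if_pos ⟨h1, h2⟩⟩⟩)))
        rwa [ipx_sub_smul] at hmem
      set T : List ℝ := A.map fun a => if 0 < ipx a v then ipx a x / ipx a v else 0 with hT
      have hkey : ∀ a ∈ A, ipx a x ≤ (T.foldr max 0) * ipx a v := by
        intro a ha
        rcases lt_trichotomy (ipx a v) 0 with hneg | hzero | hpos
        · have h0c : 0 ≤ ipx a x / ipx a v :=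
            div_nonneg_iff.mpr (Or.inr ⟨hz a ha hneg.le, hneg.le⟩)
          have hrc : ∀ r ∈ T, r ≤ ipx a x / ipx a v := by
            intro r hr
            obtain ⟨b, hb, rfl⟩ := List.mem_map.mp hr
            by_cases hbv : 0 < ipx b v
            · rw [if_pos hbv]
              have hp := hpair b hb a ha hbv hneg
              rw [div_le_iff₀ hbv, div_mul_eq_mul_div, le_div_iff_of_neg hneg]
              nlinarith [hp]
            · rw [if_neg hbv]; exact h0c
          have : T.foldr max 0 ≤ ipx a x / ipx a v := foldr_max_le T _ h0c hrc
          rwa [le_div_iff_of_neg hneg] at this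
        · rw [hzero, mul_zero]; exact hz a ha hzero.le
        · have hmem : ipx a x / ipx a v ∈ T :=
            List.mem_map.mpr ⟨a, ha, if_pos hpos⟩
          have := le_foldr_max T _ hmem
          rwa [div_le_iff₀ hpos] at this
      refine ⟨T.foldr max 0, foldr_max_nonneg T, x - (T.foldr max 0) • v,
        (hA _).mpr fun a ha => ?_, by abel⟩
      rw [ipx_sub_smul_right]
      linarith [hkey a ha]

lemma coneMem_strict {κ : Type*} [Fintype κ] (e : κ) (S : κ → ℝ) (L : List (κ → ℝ))
    (hL : ∀ u ∈ L, ipx S u < 0 ∧ u e = 1) :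
    ∀ y, coneMem L y → ipx S y ≤ 0 ∧ (0 < y e → ipx S y < 0) := by
  induction L with
  | nil =>
    rintro y rfl
    simp [ipx_zero_right]
  | cons v L ih =>
    rintro y ⟨t, ht, y', hy', rfl⟩
    have hv := hL v (List.mem_cons_self)
    have ihy := ih (fun u hu => hL u (List.mem_cons_of_mem _ hu)) y' hy'
    rw [ipx_add, ipx_smul]
    have htv : t * ipx S v ≤ 0 := mul_nonpos_of_nonneg_of_nonpos ht hv.1.le
    constructor
    · linarith [ihy.1]
    · intro hpos
      simp only [Pi.add_apply, Pi.smul_apply, smul_eq_mul, hv.2, mul_one] at hpos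
      rcases eq_or_lt_of_le ht with rfl | htpos
      · have : 0 < y' e := by linarith
        have := ihy.2 this
        linarith
      · have : t * ipx S v < 0 := mul_neg_of_pos_of_neg htpos hv.1
        linarith [ihy.1]

theorem finitely_many_axioms_characterize_no_dutch_book
    {ι : Type*} [Fintype ι] (V : Set (ι → ℝ)) (hV : V.Finite) :
    ∃ (n : ℕ) (x : Fin n → ι → ℝ) (c : Fin n → ℝ),
      (∀ j : Fin n, ∀ v ∈ V, c j ≤ ∑ i, x j i * v i) ∧
      ∀ B : ι → ℝ,
        (¬ ∃ s : ι → ℝ, ∀ v ∈ V, (∑ i, s i * (v i - B i)) < 0) ↔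
          ∀ j : Fin n, c j ≤ ∑ i, x j i * B i := by
  classical
  rcases V.eq_empty_or_nonempty with rfl | hne
  · refine ⟨1, fun _ _ => 0, fun _ => 1, by simp, fun B => ?_⟩
    constructor
    · intro hc
      exact (hc ⟨0, by simp⟩).elim
    · intro hall _
      have h1 := hall 0
      norm_num at h1
  · -- extend each v to Option ι with value 1 at none
    set ext : (ι → ℝ) → (Option ι → ℝ) := fun v o => o.elim 1 v with hext
    have hip : ∀ (a : Option ι → ℝ) (f : ι → ℝ),
        ipx a (ext f) = a none + ∑ i, a (some i) * f i := by
      intro a f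
      rw [ipx, Fintype.sum_option]
      simp [hext]
    set L : List (Option ι → ℝ) := hV.toFinset.toList.map ext with hL
    have hmemL : ∀ v ∈ V, ext v ∈ L :=
      fun v hv => List.mem_map.mpr ⟨v, Finset.mem_toList.mpr (hV.mem_toFinset.mpr hv), rfl⟩
    obtain ⟨A, hA⟩ := exists_poly L
    refine ⟨A.length, fun j i => -(A.get j (some i)), fun j => A.get j none, ?_, ?_⟩
    · -- validity on V
      intro j v hv
      have hc : coneMem L (ext v) := coneMem_mem L (ext v) (hmemL v hv)
      have h0 : ipx (A.get j) (ext v) ≤ 0 := (hA _).mp hc _ (A.get_mem j)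
      rw [hip] at h0
      have : ∑ i, -(A.get j (some i)) * v i = -∑ i, A.get j (some i) * v i := by
        simp [neg_mul]
      rw [this]; linarith
    · intro B
      have hiffB : (∀ j : Fin A.length, A.get j none ≤ ∑ i, -(A.get j (some i)) * B i) ↔
          coneMem L (ext B) := by
        rw [hA]
        constructor
        · intro hj a ha
          obtain ⟨j, rfl⟩ := List.get_of_mem ha
          have := hj j
          rw [hip]
          have hns : ∑ i, -(A.get j (some i)) * B i = -∑ i, A.get j (some i) * B i := by
            simp [neg_mul]
          rw [hns] at this
          linarith
        · intro ha j
          have := ha _ (A.get_mem j)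
          rw [hip] at this
          have hns : ∑ i, -(A.get j (some i)) * B i = -∑ i, A.get j (some i) * B i := by
            simp [neg_mul]
          rw [hns]; linarith
      constructor
      · -- no dutch book → inequalities
        intro hnd j
        by_contra hlt
        push_neg at hlt
        refine hnd ⟨fun i => A.get j (some i), fun v hv => ?_⟩
        have hc : coneMem L (ext v) := coneMem_mem L (ext v) (hmemL v hv)
        have h0 : ipx (A.get j) (ext v) ≤ 0 := (hA _).mp hc _ (A.get_mem j)
        rw [hip] at h0
        have hsplit : ∑ i, A.get j (some i) * (v i - B i)
            = (∑ i, A.get j (some i) * v i) - ∑ i, A.get j (some i) * B i := by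
          rw [← Finset.sum_sub_distrib]; congr 1; funext i; ring
        have hBs : ∑ i, -(A.get j (some i)) * B i = -∑ i, A.get j (some i) * B i := by
          simp [neg_mul]
        rw [hBs] at hlt
        rw [hsplit]; linarith
      · -- inequalities → no dutch book
        intro hineq
        rintro ⟨s, hs⟩
        have hcB : coneMem L (ext B) := hiffB.mp hineq
        set σ := ∑ i, s i * B i with hσ
        set S : Option ι → ℝ := fun o => o.elim (-σ) s with hS
        have hSL : ∀ u ∈ L, ipx S u < 0 ∧ u none = 1 := by
          intro u hu
          obtain ⟨v, hvF, rfl⟩ := List.mem_map.mp hu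
          have hv : v ∈ V := hV.mem_toFinset.mp (Finset.mem_toList.mp hvF)
          constructor
          · rw [hip]
            have hsv := hs v hv
            have : ∑ i, s i * (v i - B i) = (∑ i, s i * v i) - σ := by
              rw [hσ, ← Finset.sum_sub_distrib]; congr 1; funext i; ring
            rw [this] at hsv
            simp [hS]
            linarith
          · simp [hext]
        have := (coneMem_strict none S L hSL (ext B) hcB).2 (by simp [hext])
        rw [hip] at this
        simp [hS, hσ] at this
end

section
/- Let ι be a type and let V be a set of functions from ι to ℝ such that for every finite subset Γ of ι the set of restrictions { v restricted to Γ : v ∈ V } is finite. Let B : ι → ℝ. Then the following are equivalent: (a) B satisfies every valid finitary linear formal inequality, i.e., for all n : ℕ, θ : Fin n → ι, s : Fin n → ℝ, and c : ℝ, if c ≤ ∑ j, s j * v (θ j) for every v ∈ V, then c ≤ ∑ j, s j * B (θ j); (b) for every finite subset Γ of ι, the restriction of B to Γ lies in the convex hull (over ℝ) of the set { v restricted to Γ : v ∈ V } inside the space of functions Γ → ℝ. -/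
theorem formal_inequalities_iff_local_convex_combination
    {ι : Type*} (V : Set (ι → ℝ)) (B : ι → ℝ)
    (hV : ∀ Γ : Finset ι, {f : Γ → ℝ | ∃ v ∈ V, f = fun i : Γ => v i}.Finite) :
    (∀ (n : ℕ) (θ : Fin n → ι) (s : Fin n → ℝ) (c : ℝ),
        (∀ v ∈ V, c ≤ ∑ j, s j * v (θ j)) → c ≤ ∑ j, s j * B (θ j)) ↔
      ∀ Γ : Finset ι,
        (fun i : Γ => B i) ∈
          convexHull ℝ {f : Γ → ℝ | ∃ v ∈ V, f = fun i : Γ => v i} := by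
  classical
  constructor
  · intro H Γ
    by_contra hB
    set S : Set (↥Γ → ℝ) := {f : Γ → ℝ | ∃ v ∈ V, f = fun i : Γ => v i} with hS
    obtain ⟨f, u, hfu, huB⟩ :=
      geometric_hahn_banach_closed_point ((convex_convexHull ℝ S))
        ((hV Γ).isClosed_convexHull (𝕜 := ℝ)) hB
    -- define the formal inequality
    set n := Γ.card with hn
    set e : Fin n ≃ Γ := Γ.equivFin.symm with he
    set g : ↥Γ → ℝ := fun i => f (fun j => if i = j then 1 else 0) with hg
    have key : ∀ w : ι → ℝ,
        ∑ j : Fin n, (-(g (e j))) * w ((e j : ι)) = -(f (fun i : Γ => w i)) := by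
      intro w
      have h1 : ∑ j : Fin n, (-(g (e j))) * w ((e j : ι))
          = ∑ i : ↥Γ, (-(g i)) * w (i : ι) :=
        Equiv.sum_comp e (fun i : ↥Γ => (-(g i)) * w (i : ι))
      rw [h1]
      have h2 := LinearMap.pi_apply_eq_sum_univ (f.toLinearMap) (fun i : Γ => w i)
      simp only [ContinuousLinearMap.coe_coe, smul_eq_mul] at h2
      rw [h2, ← Finset.sum_neg_distrib]
      exact Finset.sum_congr rfl (fun i _ => by ring)
    have hle : ∀ v ∈ V, -u ≤ ∑ j : Fin n, (-(g (e j))) * v ((e j : ι)) := by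
      intro v hv
      rw [key v]
      have : (fun i : Γ => v i) ∈ convexHull ℝ S :=
        subset_convexHull ℝ S ⟨v, hv, rfl⟩
      have := hfu _ this
      linarith
    have := H n (fun j => (e j : ι)) (fun j => -(g (e j))) (-u) hle
    rw [key B] at this
    linarith
  · intro H n θ s c hle
    set Γ : Finset ι := Finset.image θ Finset.univ with hΓ
    set S : Set (↥Γ → ℝ) := {f : Γ → ℝ | ∃ v ∈ V, f = fun i : Γ => v i} with hS
    have hmem : ∀ j : Fin n, θ j ∈ Γ := fun j =>
      Finset.mem_image_of_mem θ (Finset.mem_univ j)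
    set L : (↥Γ → ℝ) →ₗ[ℝ] ℝ :=
      { toFun := fun f => ∑ j : Fin n, s j * f ⟨θ j, hmem j⟩
        map_add' := by intro a b; simp [Finset.sum_add_distrib, mul_add]
        map_smul' := by
          intro r a
          simp only [Pi.smul_apply, smul_eq_mul, RingHom.id_apply, Finset.mul_sum]
          exact Finset.sum_congr rfl (fun j _ => by ring) } with hL
    have hconv : Convex ℝ {f : ↥Γ → ℝ | c ≤ L f} :=
      convex_halfSpace_ge (LinearMap.isLinear L) c
    have hsub : S ⊆ {f : ↥Γ → ℝ | c ≤ L f} := by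
      rintro f ⟨v, hv, rfl⟩
      exact hle v hv
    have := convexHull_min hsub hconv (H Γ)
    exact this
end

section
/- Let ι be a type and let V be a set of functions from ι to ℝ such that for every finite subset Γ of ι the set of restrictions { v restricted to Γ : v ∈ V } is finite. Let B : ι → ℝ. Then there is no Dutch book against B — i.e., there are no n : ℕ, θ : Fin n → ι, and s : Fin n → ℝ with ∑ j, s j * (v (θ j) − B (θ j)) < 0 for every v ∈ V — if and only if for every finite subset Γ of ι the restriction of B to Γ lies in the convex hull (over ℝ) of the set { v restricted to Γ : v ∈ V } inside the space of functions Γ → ℝ. -/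
theorem no_dutch_book_iff_local_convex_combination
    {ι : Type*} (V : Set (ι → ℝ)) (B : ι → ℝ)
    (hV : ∀ Γ : Finset ι, {f : Γ → ℝ | ∃ v ∈ V, f = fun i : Γ => v i}.Finite) :
    (¬ ∃ (n : ℕ) (θ : Fin n → ι) (s : Fin n → ℝ),
        ∀ v ∈ V, (∑ j, s j * (v (θ j) - B (θ j))) < 0) ↔
      ∀ Γ : Finset ι,
        (fun i : Γ => B i) ∈
          convexHull ℝ {f : Γ → ℝ | ∃ v ∈ V, f = fun i : Γ => v i} := by
  classical
  constructor
  · intro hnd Γ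
    by_contra hB
    apply hnd
    have hclosed : IsClosed (convexHull ℝ {f : Γ → ℝ | ∃ v ∈ V, f = fun i : Γ => v i}) :=
      (hV Γ).isClosed_convexHull ℝ
    obtain ⟨f, u, hfu, hfs⟩ :=
      geometric_hahn_banach_point_closed (convex_convexHull ℝ _) hclosed hB
    set e := (Fintype.equivFin Γ).symm with he
    refine ⟨Fintype.card Γ, fun j => ((e j : Γ) : ι),
      fun j => -f (Pi.single (e j) 1), ?_⟩
    intro v hv
    have key : ∀ g : Γ → ℝ, f g = ∑ i : Γ, f (Pi.single i 1) * g i := by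
      intro g
      have hg : g = ∑ i : Γ, g i • (Pi.single i 1 : Γ → ℝ) := by
        funext j
        simp [Finset.sum_apply, Pi.single_apply]
      conv_lhs => rw [hg]
      simp [mul_comm]
    have hvmem : (fun i : Γ => v i) ∈ convexHull ℝ {f : Γ → ℝ | ∃ v ∈ V, f = fun i : Γ => v i} :=
      subset_convexHull ℝ _ ⟨v, hv, rfl⟩
    have h1 : f (fun i : Γ => B i) < f (fun i : Γ => v i) := hfu.trans (hfs _ hvmem)
    have hsum : ∑ j, (-f (Pi.single (e j) 1)) * (v (e j) - B (e j))
        = -(f (fun i : Γ => v i) - f (fun i : Γ => B i)) := by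
      rw [key (fun i : Γ => v i), key (fun i : Γ => B i),
        Equiv.sum_comp e (fun i : Γ => -f (Pi.single i 1) * (v (i : ι) - B (i : ι)))]
      rw [Finset.sum_congr rfl (fun i _ => show
          -f (Pi.single i 1) * (v (i : ι) - B (i : ι))
            = f (Pi.single i 1) * B (i : ι) - f (Pi.single i 1) * v (i : ι) by ring),
        Finset.sum_sub_distrib]
      ring
    calc ∑ j, (-f (Pi.single (e j) 1)) * (v (e j) - B (e j))
        = -(f (fun i : Γ => v i) - f (fun i : Γ => B i)) := hsum
      _ < 0 := by linarith
  · rintro hcv ⟨n, θ, s, hs⟩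
    set Γ : Finset ι := Finset.image θ Finset.univ with hΓ
    have hmem : ∀ j, θ j ∈ Γ := fun j => Finset.mem_image_of_mem θ (Finset.mem_univ j)
    have hlin : IsLinearMap ℝ (fun g : Γ → ℝ => ∑ j, s j * g ⟨θ j, hmem j⟩) := by
      constructor
      · intro x y; simp [mul_add, Finset.sum_add_distrib]
      · intro c x
        simp only [Pi.smul_apply, smul_eq_mul, Finset.mul_sum]
        exact Finset.sum_congr rfl fun j _ => by ring
    have hC : Convex ℝ {g : Γ → ℝ | (∑ j, s j * g ⟨θ j, hmem j⟩) < ∑ j, s j * B (θ j)} :=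
      convex_halfSpace_lt hlin _
    have hsub : {f : Γ → ℝ | ∃ v ∈ V, f = fun i : Γ => v i} ⊆
        {g : Γ → ℝ | (∑ j, s j * g ⟨θ j, hmem j⟩) < ∑ j, s j * B (θ j)} := by
      rintro g ⟨v, hv, rfl⟩
      have := hs v hv
      simp only [Set.mem_setOf_eq]
      have hsplit : ∑ j, s j * (v (θ j) - B (θ j))
          = ∑ j, s j * v (θ j) - ∑ j, s j * B (θ j) := by
        rw [← Finset.sum_sub_distrib]
        exact Finset.sum_congr rfl fun j _ => by ring
      linarith [hsplit ▸ this]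
    have hBin := convexHull_min hsub hC (hcv Γ)
    simp only [Set.mem_setOf_eq] at hBin
    exact lt_irrefl _ hBin
end

section
/- Let Ω be a finite nonempty type and let B : Set Ω → ℝ. For ω ∈ Ω define the evaluation v_ω : Set Ω → ℝ by v_ω A = 1 if ω ∈ A and v_ω A = 0 otherwise. Then there is no Dutch book against B — i.e., there are no n : ℕ, events A : Fin n → Set Ω, and stakes s : Fin n → ℝ such that ∑ j, s j * (v_ω (A j) − B (A j)) < 0 for every ω ∈ Ω — if and only if B satisfies the probability axioms: (P1) B Set.univ = 1 and B ∅ = 0; (P2) if A ⊆ C then B A ≤ B C; (P3) B (A ∪ C) = B A + B C − B (A ∩ C) for all A, C : Set Ω. -/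
open Classical in
theorem ramsey_de_finetti
    {Ω : Type*} [Fintype Ω] [Nonempty Ω] (B : Set Ω → ℝ) :
    (¬ ∃ (n : ℕ) (A : Fin n → Set Ω) (s : Fin n → ℝ),
        ∀ ω : Ω, (∑ j, s j * ((if ω ∈ A j then (1 : ℝ) else 0) - B (A j))) < 0) ↔
      ((B Set.univ = 1 ∧ B ∅ = 0) ∧
       (∀ A C : Set Ω, A ⊆ C → B A ≤ B C) ∧
       (∀ A C : Set Ω, B (A ∪ C) = B A + B C - B (A ∩ C))) := by
  constructor
  · intro h
    have huniv : B Set.univ = 1 := by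
      by_contra hne
      apply h
      refine ⟨1, fun _ => Set.univ, fun _ => -(1 - B Set.univ), fun ω => ?_⟩
      have hx : (1 : ℝ) - B Set.univ ≠ 0 := sub_ne_zero.mpr (Ne.symm hne)
      simp [Fin.sum_univ_one]
      nlinarith [mul_self_pos.mpr hx]
    have hempty : B ∅ = 0 := by
      by_contra hne
      apply h
      refine ⟨1, fun _ => (∅ : Set Ω), fun _ => B ∅, fun ω => ?_⟩
      simp [Fin.sum_univ_one]
      nlinarith [mul_self_pos.mpr hne]
    have hmono : ∀ A C : Set Ω, A ⊆ C → B A ≤ B C := by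
      intro A C hAC
      by_contra hlt
      push_neg at hlt
      apply h
      refine ⟨2, ![A, C], ![1, -1], fun ω => ?_⟩
      rw [Fin.sum_univ_two]
      by_cases hA : ω ∈ A
      · have hC : ω ∈ C := hAC hA
        simp [hA, hC]; linarith
      · by_cases hC : ω ∈ C <;> simp [hA, hC] <;> linarith
    refine ⟨⟨huniv, hempty⟩, hmono, ?_⟩
    intro A C
    by_contra hne
    have hdne : B (A ∪ C) - (B A + B C - B (A ∩ C)) ≠ 0 := sub_ne_zero.mpr hne
    apply h
    refine ⟨4, ![A, C, A ∪ C, A ∩ C],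
      ![-(B (A ∪ C) - (B A + B C - B (A ∩ C))), -(B (A ∪ C) - (B A + B C - B (A ∩ C))),
        B (A ∪ C) - (B A + B C - B (A ∩ C)), B (A ∪ C) - (B A + B C - B (A ∩ C))], fun ω => ?_⟩
    rw [Fin.sum_univ_four]
    have hsq : 0 < (B (A ∪ C) - (B A + B C - B (A ∩ C))) * (B (A ∪ C) - (B A + B C - B (A ∩ C))) :=
      mul_self_pos.mpr hdne
    by_cases hA : ω ∈ A <;> by_cases hC : ω ∈ C <;>
      simp [hA, hC, Set.mem_union, Set.mem_inter_iff] <;> nlinarith [hsq]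
  · rintro ⟨⟨huniv, hempty⟩, hmono, hadd⟩ ⟨n, A, s, hs⟩
    have hdisj : ∀ X Y : Set Ω, X ∩ Y = ∅ → B (X ∪ Y) = B X + B Y := by
      intro X Y hXY
      rw [hadd, hXY, hempty]; ring
    have hfin : ∀ t : Finset Ω, B ↑t = ∑ ω ∈ t, B {ω} := by
      intro t
      induction t using Finset.induction with
      | empty => simpa using hempty
      | @insert a t ha ih =>
        rw [Finset.coe_insert, Set.insert_eq, hdisj {a} ↑t (by
          ext x; simp; rintro rfl; exact fun hx => ha hx), ih,
          Finset.sum_insert ha]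
    have hA : ∀ X : Set Ω, B X = ∑ ω, if ω ∈ X then B {ω} else 0 := by
      intro X
      have h1 : B X = B ↑X.toFinset := by rw [Set.coe_toFinset]
      rw [h1, hfin, ← Finset.sum_filter]
      congr 1
      ext x; simp
    have hp0 : ∀ ω : Ω, 0 ≤ B {ω} := by
      intro ω
      have := hmono ∅ {ω} (Set.empty_subset _)
      rwa [hempty] at this
    have hp1 : (∑ ω, B {ω}) = 1 := by
      have := hfin Finset.univ
      rw [Finset.coe_univ, huniv] at this
      exact this.symm
    have key : (∑ ω, B {ω} * (∑ j, s j * ((if ω ∈ A j then (1:ℝ) else 0) - B (A j)))) = 0 := by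
      have swap : (∑ ω, B {ω} * (∑ j, s j * ((if ω ∈ A j then (1:ℝ) else 0) - B (A j))))
          = ∑ j, ∑ ω : Ω, B {ω} * (s j * ((if ω ∈ A j then (1:ℝ) else 0) - B (A j))) := by
        simp_rw [Finset.mul_sum]
        exact Finset.sum_comm
      rw [swap]
      apply Finset.sum_eq_zero
      intro j _
      have : ∀ ω : Ω, B {ω} * (s j * ((if ω ∈ A j then (1:ℝ) else 0) - B (A j)))
          = s j * (if ω ∈ A j then B {ω} else 0) - s j * (B (A j) * B {ω}) := by
        intro ω; by_cases hm : ω ∈ A j <;> simp [hm] <;> ring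
      simp_rw [this, Finset.sum_sub_distrib, ← Finset.mul_sum, ← hA, hp1]
      ring_nf
    obtain ⟨ω0, hω0⟩ : ∃ ω : Ω, 0 < B {ω} := by
      by_contra hc
      push_neg at hc
      have : (∑ ω, B {ω}) = 0 := Finset.sum_eq_zero fun ω _ => le_antisymm (hc ω) (hp0 ω)
      rw [hp1] at this; norm_num at this
    have hlt : (∑ ω, B {ω} * (∑ j, s j * ((if ω ∈ A j then (1:ℝ) else 0) - B (A j)))) < ∑ _ω : Ω, (0:ℝ) := by
      refine Finset.sum_lt_sum (fun i _ => mul_nonpos_of_nonneg_of_nonpos (hp0 i) (le_of_lt (hs i)))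
        ⟨ω0, Finset.mem_univ _, mul_neg_of_pos_of_neg hω0 (hs ω0)⟩
    rw [key] at hlt
    simp at hlt
end

section
/- Let Ω be a finite nonempty type and let B : Set Ω → ℝ. For ω ∈ Ω define the evaluation v_ω : Set Ω → ℝ by v_ω A = 1 if ω ∈ A and v_ω A = 0 otherwise. Then B satisfies the probability axioms — (P1) B Set.univ = 1 and B ∅ = 0; (P2) if A ⊆ C then B A ≤ B C; (P3) B (A ∪ C) = B A + B C − B (A ∩ C) for all A, C : Set Ω — if and only if B lies in the convex hull (over ℝ) of the set of evaluations { v_ω : ω ∈ Ω } inside the space of functions Set Ω → ℝ; equivalently, if and only if there exists p : Ω → ℝ with p ω ≥ 0 for all ω, ∑ ω, p ω = 1, and B A = ∑ ω ∈ A, p ω for every A : Set Ω. -/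
open Classical

private lemma ax_to_p {Ω : Type*} [Fintype Ω] (B : Set Ω → ℝ)
    (h : (B Set.univ = 1 ∧ B ∅ = 0) ∧
      (∀ A C : Set Ω, A ⊆ C → B A ≤ B C) ∧
      (∀ A C : Set Ω, B (A ∪ C) = B A + B C - B (A ∩ C))) :
    ∃ p : Ω → ℝ, (∀ ω, 0 ≤ p ω) ∧ (∑ ω, p ω) = 1 ∧
      ∀ A : Set Ω, B A = ∑ ω ∈ A.toFinset, p ω := by
  obtain ⟨⟨h1, h0⟩, hmono, hmod⟩ := h
  have key : ∀ s : Finset Ω, B (↑s) = ∑ ω ∈ s, B {ω} := by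
    intro s
    refine Finset.induction_on s ?_ ?_
    · rw [Finset.coe_empty, Finset.sum_empty]; exact h0
    · intro a s ha ih
      have hset : ((insert a s : Finset Ω) : Set Ω) = {a} ∪ ↑s := by
        rw [Finset.coe_insert, Set.insert_eq]
      have hint : ({a} : Set Ω) ∩ ↑s = ∅ := by
        ext x; simp; rintro rfl; exact ha
      rw [hset, hmod, hint, h0, ih, Finset.sum_insert ha]
      ring
  refine ⟨fun ω => B {ω}, fun ω => ?_, ?_, ?_⟩
  · have := hmono ∅ {ω} (Set.empty_subset _)
    linarith
  · have := key Finset.univ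
    simpa [h1] using this.symm
  · intro A
    have := key A.toFinset
    simpa using this

private lemma p_to_ax {Ω : Type*} [Fintype Ω] (B : Set Ω → ℝ) (p : Ω → ℝ)
    (hp0 : ∀ ω, 0 ≤ p ω) (hp1 : (∑ ω, p ω) = 1)
    (hB : ∀ A : Set Ω, B A = ∑ ω ∈ A.toFinset, p ω) :
    (B Set.univ = 1 ∧ B ∅ = 0) ∧
      (∀ A C : Set Ω, A ⊆ C → B A ≤ B C) ∧
      (∀ A C : Set Ω, B (A ∪ C) = B A + B C - B (A ∩ C)) := by
  refine ⟨⟨?_, ?_⟩, ?_, ?_⟩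
  · rw [hB]; simpa using hp1
  · rw [hB]; simp
  · intro A C hAC
    rw [hB, hB]
    exact Finset.sum_le_sum_of_subset_of_nonneg
      (by simpa using Set.toFinset_mono hAC) (fun i _ _ => hp0 i)
  · intro A C
    rw [hB, hB, hB, hB, Set.toFinset_union, Set.toFinset_inter]
    have := Finset.sum_union_inter (s₁ := A.toFinset) (s₂ := C.toFinset) (f := p)
    linarith

open Classical in
theorem probability_axioms_iff_convex_combination_of_evaluations
    {Ω : Type*} [Fintype Ω] [Nonempty Ω] (B : Set Ω → ℝ) :
    (((B Set.univ = 1 ∧ B ∅ = 0) ∧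
      (∀ A C : Set Ω, A ⊆ C → B A ≤ B C) ∧
      (∀ A C : Set Ω, B (A ∪ C) = B A + B C - B (A ∩ C))) ↔
        B ∈ convexHull ℝ
          {f : Set Ω → ℝ | ∃ ω : Ω, f = fun A => if ω ∈ A then (1 : ℝ) else 0}) ∧
    (((B Set.univ = 1 ∧ B ∅ = 0) ∧
      (∀ A C : Set Ω, A ⊆ C → B A ≤ B C) ∧
      (∀ A C : Set Ω, B (A ∪ C) = B A + B C - B (A ∩ C))) ↔
        ∃ p : Ω → ℝ, (∀ ω, 0 ≤ p ω) ∧ (∑ ω, p ω) = 1 ∧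
          ∀ A : Set Ω, B A = ∑ᶠ ω ∈ A, p ω) := by
  have hfin : ∀ (p : Ω → ℝ) (A : Set Ω), (∑ᶠ ω ∈ A, p ω) = ∑ ω ∈ A.toFinset, p ω := by
    intro p A
    rw [← finsum_mem_coe_finset, Set.coe_toFinset]
  constructor
  · constructor
    · intro h
      obtain ⟨p, hp0, hp1, hB⟩ := ax_to_p B h
      have hBeq : B = ∑ ω : Ω, p ω • (fun A => if ω ∈ A then (1:ℝ) else 0) := by
        funext A
        rw [hB A, Finset.sum_apply]
        simp only [Pi.smul_apply, smul_eq_mul, mul_ite, mul_one, mul_zero,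
          ← Set.mem_toFinset]
        rw [Finset.sum_ite_mem, Finset.univ_inter]
      rw [hBeq]
      exact (convex_convexHull ℝ _).sum_mem (fun ω _ => hp0 ω) (by simpa using hp1)
        (fun ω _ => subset_convexHull ℝ _ ⟨ω, rfl⟩)
    · intro h
      have hconv : Convex ℝ {B : Set Ω → ℝ |
          (B Set.univ = 1 ∧ B ∅ = 0) ∧
          (∀ A C : Set Ω, A ⊆ C → B A ≤ B C) ∧
          (∀ A C : Set Ω, B (A ∪ C) = B A + B C - B (A ∩ C))} := by
        intro f hf g hg a b ha hb hab
        obtain ⟨⟨hf1, hf0⟩, hfm, hfd⟩ := hf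
        obtain ⟨⟨hg1, hg0⟩, hgm, hgd⟩ := hg
        refine ⟨⟨?_, ?_⟩, ?_, ?_⟩
        · simp [hf1, hg1, hab]
        · simp [hf0, hg0]
        · intro A C hAC
          have := hfm A C hAC; have := hgm A C hAC
          simp only [Pi.add_apply, Pi.smul_apply, smul_eq_mul]
          nlinarith
        · intro A C
          have := hfd A C; have := hgd A C
          simp only [Pi.add_apply, Pi.smul_apply, smul_eq_mul]
          nlinarith
      refine convexHull_min ?_ hconv h
      rintro f ⟨ω, rfl⟩
      refine ⟨⟨by simp, by simp⟩, ?_, ?_⟩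
      · intro A C hAC
        by_cases hA : ω ∈ A
        · simp [hA, hAC hA]
        · by_cases hC : ω ∈ C <;> simp [hA, hC]
      · intro A C
        by_cases hA : ω ∈ A <;> by_cases hC : ω ∈ C <;> simp_all
  · constructor
    · intro h
      obtain ⟨p, hp0, hp1, hB⟩ := ax_to_p B h
      exact ⟨p, hp0, hp1, fun A => by rw [hB A, hfin]⟩
    · rintro ⟨p, hp0, hp1, hB⟩
      exact p_to_ax B p hp0 hp1 (fun A => by rw [hB A, hfin])
end

section
/- Let L be a finite lattice, let W be a nonempty finite set of lattice homomorphisms from L to Bool, and write ⟦w a⟧ for the real number 1 if w a = true and 0 if w a = false. Let B : L → ℝ satisfy 0 ≤ B a ≤ 1 for all a ∈ L. Then B lies in the convex hull (over ℝ) of the set of functions { (fun a => ⟦w a⟧) : w ∈ W } inside the space of functions L → ℝ if and only if B satisfies: (L1) if w a = true for every w ∈ W then B a = 1, and if w a = false for every w ∈ W then B a = 0; (L2) if for every w ∈ W, w a = true implies w b = true, then B a ≤ B b; (L3) B (a ⊔ b) + B (a ⊓ b) = B a + B b for all a, b ∈ L. -/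
open Finset

lemma paris_ext_meas {α : Type*} [DecidableEq α] :
    ∀ (n : ℕ) (W : Finset α) (K : Finset (Finset α)) (μ : Finset α → ℝ),
    W.card = n →
    (∀ X ∈ K, X ⊆ W) → ∅ ∈ K → W ∈ K →
    (∀ X ∈ K, ∀ Y ∈ K, X ∪ Y ∈ K) →
    (∀ X ∈ K, ∀ Y ∈ K, X ∩ Y ∈ K) →
    μ ∅ = 0 →
    (∀ X ∈ K, ∀ Y ∈ K, X ⊆ Y → μ X ≤ μ Y) →
    (∀ X ∈ K, ∀ Y ∈ K, μ (X ∪ Y) + μ (X ∩ Y) = μ X + μ Y) →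
    (∀ u ∈ W, ∀ v ∈ W, u ≠ v → ∃ X ∈ K, (u ∈ X ∧ v ∉ X) ∨ (v ∈ X ∧ u ∉ X)) →
    ∃ lam : α → ℝ, (∀ w, 0 ≤ lam w) ∧ ∀ X ∈ K, ∑ w ∈ X, lam w = μ X := by
  intro n
  induction n with
  | zero =>
    intro W K μ hcard hsubW h0K hWK hunion hinter hμ0 hmono hmod hsep
    refine ⟨fun _ => 0, fun _ => le_refl _, fun X hX => ?_⟩
    have hW : W = ∅ := card_eq_zero.1 hcard
    have : X = ∅ := subset_empty.1 (hW ▸ hsubW X hX)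
    simp [this, hμ0]
  | succ n ih =>
    intro W K μ hcard hsubW h0K hWK hunion hinter hμ0 hmono hmod hsep
    classical
    have hWne : W.Nonempty := card_pos.1 (by omega)
    set A : α → Finset α := fun w => W.filter (fun v => ∀ X ∈ K, w ∈ X → v ∈ X) with hA
    obtain ⟨wst, hwstW, hmin⟩ := Finset.exists_min_image W (fun w => (A w).card) hWne
    have hAself : ∀ w ∈ W, w ∈ A w := fun w hw => mem_filter.2 ⟨hw, fun X _ h => h⟩
    -- A wst = {wst}
    have hAst : A wst = {wst} := by
      apply Finset.Subset.antisymm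
      · intro v hv
        rw [mem_singleton]
        by_contra hne
        have hvW : v ∈ W := (mem_filter.1 hv).1
        have hvA : ∀ X ∈ K, wst ∈ X → v ∈ X := (mem_filter.1 hv).2
        have hsub : A v ⊆ A wst := by
          intro u hu
          obtain ⟨huW, hu2⟩ := mem_filter.1 hu
          exact mem_filter.2 ⟨huW, fun X hX hw => hu2 X hX (hvA X hX hw)⟩
        have hwst_not : wst ∉ A v := by
          obtain ⟨X, hXK, hc⟩ := hsep v hvW wst hwstW hne
          rcases hc with ⟨hv1, hw1⟩ | ⟨hw1, hv1⟩
          · intro hmem; exact hw1 ((mem_filter.1 hmem).2 X hXK hv1)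
          · exact absurd (hvA X hXK hw1) hv1
        have : (A wst).card ≤ (A v).card := hmin v hvW
        have : (A v).card < (A wst).card :=
          card_lt_card ⟨hsub, fun hss => hwst_not (hss (hAself wst hwstW))⟩
        omega
      · intro v hv
        rw [mem_singleton] at hv
        rw [hv]; exact hAself wst hwstW
    -- {wst} ∈ K
    have hsingK : ({wst} : Finset α) ∈ K := by
      have hFne : (K.filter (fun X => wst ∈ X)).Nonempty := ⟨W, mem_filter.2 ⟨hWK, hwstW⟩⟩
      have hMK : (K.filter (fun X => wst ∈ X)).inf' hFne id ∈ K := by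
        apply Finset.inf'_mem (↑K : Set (Finset α))
        · intro x hx y hy; exact hinter x hx y hy
        · intro i hi; exact (mem_filter.1 hi).1
      have hMeq : (K.filter (fun X => wst ∈ X)).inf' hFne id = {wst} := by
        rw [← hAst]
        apply Finset.Subset.antisymm
        · intro v hv
          have hvW : v ∈ W :=
            Finset.le_iff_subset.1 (Finset.inf'_le id (mem_filter.2 ⟨hWK, hwstW⟩)) hv
          refine mem_filter.2 ⟨hvW, fun X hX hw => ?_⟩
          exact Finset.le_iff_subset.1 (Finset.inf'_le id (mem_filter.2 ⟨hX, hw⟩)) hv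
        · intro v hv
          obtain ⟨hvW, hv2⟩ := mem_filter.1 hv
          have hle : ({v} : Finset α) ≤ (K.filter (fun X => wst ∈ X)).inf' hFne id := by
            apply Finset.le_inf'
            intro X hX
            obtain ⟨hXK, hwX⟩ := mem_filter.1 hX
            simpa using hv2 X hXK hwX
          simpa using Finset.le_iff_subset.1 hle (mem_singleton_self v)
      rwa [hMeq] at hMK
    set a : ℝ := μ {wst} with ha
    have ha0 : 0 ≤ a := by
      have := hmono ∅ h0K {wst} hsingK (empty_subset _)
      rwa [hμ0] at this
    -- the modularity trick for adding wst
    have hadd : ∀ X ∈ K, wst ∉ X → insert wst X ∈ K → μ (insert wst X) = μ X + a := by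
      intro X hXK hw hins
      have h1 : X ∪ {wst} = insert wst X := by
        ext u; simp [or_comm]
      have h2 : X ∩ {wst} = ∅ := by
        ext u
        simp only [mem_inter, mem_singleton, notMem_empty, iff_false, not_and]
        rintro hu rfl; exact hw hu
      have := hmod X hXK {wst} hsingK
      rw [h1, h2, hμ0] at this
      linarith
    set W' : Finset α := W.erase wst with hW'
    set K' : Finset (Finset α) := K.image (fun X => X.erase wst) with hK'
    set μ' : Finset α → ℝ := fun Z => if insert wst Z ∈ K then μ (insert wst Z) - a else μ Z with hμ'
    have h1 : ∀ X ∈ K, μ' (X.erase wst) = μ X - (if wst ∈ X then a else 0) := by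
      intro X hXK
      by_cases hw : wst ∈ X
      · have hie : insert wst (X.erase wst) = X := insert_erase hw
        simp only [hμ']
        rw [hie, if_pos hXK, if_pos hw]
      · rw [erase_eq_of_notMem hw]
        simp only [hμ', if_neg hw, sub_zero]
        by_cases hins : insert wst X ∈ K
        · rw [if_pos hins, hadd X hXK hw hins]; ring
        · rw [if_neg hins]
    -- apply ih
    have hcard' : W'.card = n := by
      rw [hW', card_erase_of_mem hwstW, hcard]
      omega
    have hK'sub : ∀ Z ∈ K', Z ⊆ W' := by
      intro Z hZ
      obtain ⟨X, hXK, rfl⟩ := mem_image.1 hZ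
      exact erase_subset_erase _ (hsubW X hXK)
    have h0K' : ∅ ∈ K' := mem_image.2 ⟨∅, h0K, erase_empty wst⟩
    have hWK' : W' ∈ K' := mem_image.2 ⟨W, hWK, rfl⟩
    have hdistrib_u : ∀ X Y : Finset α, (X.erase wst) ∪ (Y.erase wst) = (X ∪ Y).erase wst := by
      intro X Y; ext u; simp [mem_erase, mem_union]; tauto
    have hdistrib_i : ∀ X Y : Finset α, (X.erase wst) ∩ (Y.erase wst) = (X ∩ Y).erase wst := by
      intro X Y; ext u; simp [mem_erase, mem_inter]; tauto
    have hunion' : ∀ Z1 ∈ K', ∀ Z2 ∈ K', Z1 ∪ Z2 ∈ K' := by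
      intro Z1 hZ1 Z2 hZ2
      obtain ⟨X, hXK, rfl⟩ := mem_image.1 hZ1
      obtain ⟨Y, hYK, rfl⟩ := mem_image.1 hZ2
      rw [hdistrib_u]
      exact mem_image.2 ⟨X ∪ Y, hunion X hXK Y hYK, rfl⟩
    have hinter' : ∀ Z1 ∈ K', ∀ Z2 ∈ K', Z1 ∩ Z2 ∈ K' := by
      intro Z1 hZ1 Z2 hZ2
      obtain ⟨X, hXK, rfl⟩ := mem_image.1 hZ1
      obtain ⟨Y, hYK, rfl⟩ := mem_image.1 hZ2
      rw [hdistrib_i]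
      exact mem_image.2 ⟨X ∩ Y, hinter X hXK Y hYK, rfl⟩
    have hμ'0 : μ' ∅ = 0 := by
      have := h1 ∅ h0K
      rw [erase_empty] at this
      simpa [hμ0] using this
    have hmono' : ∀ Z1 ∈ K', ∀ Z2 ∈ K', Z1 ⊆ Z2 → μ' Z1 ≤ μ' Z2 := by
      intro Z1 hZ1 Z2 hZ2 hss
      obtain ⟨X, hXK, rfl⟩ := mem_image.1 hZ1
      obtain ⟨Y, hYK, rfl⟩ := mem_image.1 hZ2
      rw [h1 X hXK, h1 Y hYK]
      by_cases hx : wst ∈ X <;> by_cases hy : wst ∈ Y <;>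
        simp only [hx, hy, if_true, if_false, sub_zero]
      · -- wst ∈ X, wst ∈ Y : X ⊆ Y
        have hXY : X ⊆ Y := by
          intro u hu
          by_cases h : u = wst
          · subst h; exact hy
          · exact (mem_erase.1 (hss (mem_erase.2 ⟨h, hu⟩))).2
        linarith [hmono X hXK Y hYK hXY]
      · -- wst ∈ X, wst ∉ Y
        have hins : insert wst Y ∈ K := by
          have h1' : Y ∪ {wst} = insert wst Y := by ext u; simp [or_comm]
          rw [← h1']; exact hunion Y hYK {wst} hsingK
        have hXY : X ⊆ insert wst Y := by
          intro u hu
          by_cases h : u = wst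
          · subst h; exact mem_insert_self _ _
          · rw [erase_eq_of_notMem hy] at hss
            exact mem_insert_of_mem (hss (mem_erase.2 ⟨h, hu⟩))
        have := hmono X hXK _ hins hXY
        rw [hadd Y hYK hy hins] at this
        linarith
      · -- wst ∉ X, wst ∈ Y
        have hins : insert wst X ∈ K := by
          have h1' : X ∪ {wst} = insert wst X := by ext u; simp [or_comm]
          rw [← h1']; exact hunion X hXK {wst} hsingK
        have hXY : insert wst X ⊆ Y := by
          intro u hu
          rcases mem_insert.1 hu with rfl | hu
          · exact hy
          · rw [erase_eq_of_notMem hx] at hss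
            exact (erase_subset _ _) (hss hu)
        have := hmono _ hins Y hYK hXY
        rw [hadd X hXK hx hins] at this
        linarith
      · -- neither
        apply hmono X hXK Y hYK
        rw [erase_eq_of_notMem hx, erase_eq_of_notMem hy] at hss
        exact hss
    have hmod' : ∀ Z1 ∈ K', ∀ Z2 ∈ K', μ' (Z1 ∪ Z2) + μ' (Z1 ∩ Z2) = μ' Z1 + μ' Z2 := by
      intro Z1 hZ1 Z2 hZ2
      obtain ⟨X, hXK, rfl⟩ := mem_image.1 hZ1
      obtain ⟨Y, hYK, rfl⟩ := mem_image.1 hZ2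
      rw [hdistrib_u, hdistrib_i, h1 X hXK, h1 Y hYK, h1 _ (hunion X hXK Y hYK),
        h1 _ (hinter X hXK Y hYK)]
      have := hmod X hXK Y hYK
      by_cases hx : wst ∈ X <;> by_cases hy : wst ∈ Y <;>
        simp only [mem_union, mem_inter, hx, hy, true_or, or_true, true_and, and_true,
          false_or, or_false, false_and, and_false, if_true, if_false, sub_zero] <;> linarith
    have hsep' : ∀ u ∈ W', ∀ v ∈ W', u ≠ v →
        ∃ Z ∈ K', (u ∈ Z ∧ v ∉ Z) ∨ (v ∈ Z ∧ u ∉ Z) := by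
      intro u hu v hv huv
      obtain ⟨hune, huW⟩ := mem_erase.1 hu
      obtain ⟨hvne, hvW⟩ := mem_erase.1 hv
      obtain ⟨X, hXK, hc⟩ := hsep u huW v hvW huv
      refine ⟨X.erase wst, mem_image.2 ⟨X, hXK, rfl⟩, ?_⟩
      rcases hc with ⟨h1', h2'⟩ | ⟨h1', h2'⟩
      · exact Or.inl ⟨mem_erase.2 ⟨hune, h1'⟩, fun hmem => h2' (mem_erase.1 hmem).2⟩
      · exact Or.inr ⟨mem_erase.2 ⟨hvne, h1'⟩, fun hmem => h2' (mem_erase.1 hmem).2⟩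
    obtain ⟨lam', hlam'0, hlam'⟩ := ih W' K' μ' hcard' hK'sub h0K' hWK' hunion' hinter'
      hμ'0 hmono' hmod' hsep'
    refine ⟨fun w => if w = wst then a else lam' w, ?_, ?_⟩
    · intro w
      by_cases h : w = wst
      · simp [h, ha0]
      · simp [h, hlam'0 w]
    · intro X hXK
      have hsum_erase : ∑ w ∈ X.erase wst, (if w = wst then a else lam' w) =
          ∑ w ∈ X.erase wst, lam' w := by
        apply Finset.sum_congr rfl
        intro w hw
        rw [if_neg (mem_erase.1 hw).1]
      have hKey := hlam' (X.erase wst) (mem_image.2 ⟨X, hXK, rfl⟩)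
      rw [h1 X hXK] at hKey
      by_cases hw : wst ∈ X
      · have hse := Finset.sum_erase_add X (fun w => if w = wst then a else lam' w) hw
        rw [← hse, hsum_erase, hKey]
        simp [hw]
      · have her : X.erase wst = X := erase_eq_of_notMem hw
        rw [her] at hKey hsum_erase
        rw [hsum_erase, hKey, if_neg hw]
        ring


theorem paris_two_valued_lattice
    {L : Type*} [Lattice L] [Fintype L]
    (W : Set (LatticeHom L Bool)) (hWfin : W.Finite) (hWne : W.Nonempty)
    (B : L → ℝ) (hB : ∀ a : L, 0 ≤ B a ∧ B a ≤ 1) :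
    B ∈ convexHull ℝ
        {f : L → ℝ | ∃ w ∈ W, f = fun a => if w a then (1 : ℝ) else 0} ↔
      ((∀ a : L, (∀ w ∈ W, w a = true) → B a = 1) ∧
       (∀ a : L, (∀ w ∈ W, w a = false) → B a = 0) ∧
       (∀ a b : L, (∀ w ∈ W, w a = true → w b = true) → B a ≤ B b) ∧
       (∀ a b : L, B (a ⊔ b) + B (a ⊓ b) = B a + B b)) := by
  classical
  constructor
  · -- forward direction
    intro hmem
    set C : Set (L → ℝ) := {f : L → ℝ |
      (∀ a : L, (∀ w ∈ W, w a = true) → f a = 1) ∧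
      (∀ a : L, (∀ w ∈ W, w a = false) → f a = 0) ∧
      (∀ a b : L, (∀ w ∈ W, w a = true → w b = true) → f a ≤ f b) ∧
      (∀ a b : L, f (a ⊔ b) + f (a ⊓ b) = f a + f b)} with hC
    have hgen : {f : L → ℝ | ∃ w ∈ W, f = fun a => if w a then (1 : ℝ) else 0} ⊆ C := by
      rintro f ⟨w0, hw0, rfl⟩
      refine ⟨?_, ?_, ?_, ?_⟩ <;> dsimp only
      · intro a h; rw [h w0 hw0]; simp
      · intro a h; rw [h w0 hw0]; simp
      · intro a b h
        by_cases ha : w0 a = true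
        · rw [if_pos ha, if_pos (h w0 hw0 ha)]
        · rw [if_neg ha]
          split_ifs <;> norm_num
      · intro a b
        rw [map_sup w0 a b, map_inf w0 a b]
        cases hA : w0 a <;> cases hB' : w0 b <;> simp [hA, hB']
    have hconv : Convex ℝ C := by
      intro f hf g hg p q hp hq hpq
      obtain ⟨hf1, hf2, hf3, hf4⟩ := hf
      obtain ⟨hg1, hg2, hg3, hg4⟩ := hg
      refine ⟨?_, ?_, ?_, ?_⟩
      · intro a h
        simp only [Pi.add_apply, Pi.smul_apply, smul_eq_mul]
        rw [hf1 a h, hg1 a h]; linarith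
      · intro a h
        simp only [Pi.add_apply, Pi.smul_apply, smul_eq_mul]
        rw [hf2 a h, hg2 a h]; linarith
      · intro a b h
        simp only [Pi.add_apply, Pi.smul_apply, smul_eq_mul]
        have := hf3 a b h
        have := hg3 a b h
        have h1 : p * f a ≤ p * f b := mul_le_mul_of_nonneg_left (hf3 a b h) hp
        have h2 : q * g a ≤ q * g b := mul_le_mul_of_nonneg_left (hg3 a b h) hq
        linarith
      · intro a b
        simp only [Pi.add_apply, Pi.smul_apply, smul_eq_mul]
        have := hf4 a b
        have := hg4 a b
        nlinarith [hf4 a b, hg4 a b]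
    exact convexHull_min hgen hconv hmem
  · -- reverse direction
    rintro ⟨hL1, hL1', hL2, hL3⟩
    set W' : Finset (LatticeHom L Bool) := hWfin.toFinset with hW'
    have hW'mem : ∀ w : LatticeHom L Bool, w ∈ W' ↔ w ∈ W := fun w => hWfin.mem_toFinset
    have hW'ne : W'.Nonempty := by
      obtain ⟨w, hw⟩ := hWne
      exact ⟨w, (hW'mem w).2 hw⟩
    set T : L → Finset (LatticeHom L Bool) :=
      fun a => W'.filter (fun w => w a = true) with hT
    have hTmem : ∀ a (w : LatticeHom L Bool), w ∈ T a ↔ (w ∈ W ∧ w a = true) := by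
      intro a w
      rw [hT]; simp only [mem_filter, hW'mem]
    have hTeqB : ∀ a b : L, T a ⊆ T b → B a ≤ B b := by
      intro a b h
      apply hL2
      intro w hw hwa
      exact ((hTmem b w).1 (h ((hTmem a w).2 ⟨hw, hwa⟩))).2
    set K : Finset (Finset (LatticeHom L Bool)) :=
      insert ∅ (insert W' (Finset.univ.image T)) with hK
    set μ : Finset (LatticeHom L Bool) → ℝ :=
      fun X => if h : ∃ a : L, T a = X then B (Classical.choose h)
        else if X = W' then 1 else 0 with hμ
    have hμT : ∀ a : L, μ (T a) = B a := by
      intro a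
      have h : ∃ a' : L, T a' = T a := ⟨a, rfl⟩
      simp only [hμ]
      rw [dif_pos h]
      have hspec : T (Classical.choose h) = T a := Classical.choose_spec h
      have h1 : B (Classical.choose h) ≤ B a := hTeqB _ _ (le_of_eq hspec)
      have h2 : B a ≤ B (Classical.choose h) := hTeqB _ _ (le_of_eq hspec.symm)
      linarith
    have hμ0 : μ ∅ = 0 := by
      simp only [hμ]
      by_cases h : ∃ a : L, T a = (∅ : Finset (LatticeHom L Bool))
      · rw [dif_pos h]
        apply hL1'
        intro w hw
        have hnot : ¬ (w (Classical.choose h) = true) := by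
          intro htrue
          have hmem : w ∈ T (Classical.choose h) := (hTmem _ w).2 ⟨hw, htrue⟩
          rw [Classical.choose_spec h] at hmem
          exact notMem_empty w hmem
        cases hb : w (Classical.choose h) with
        | false => rfl
        | true => exact absurd hb hnot
      · rw [dif_neg h, if_neg]
        intro hcon
        exact hW'ne.ne_empty hcon.symm
    have hμW : μ W' = 1 := by
      simp only [hμ]
      by_cases h : ∃ a : L, T a = W'
      · rw [dif_pos h]
        apply hL1
        intro w hw
        have : w ∈ T (Classical.choose h) := by
          rw [Classical.choose_spec h]; exact (hW'mem w).2 hw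
        exact ((hTmem _ w).1 this).2
      · rw [dif_neg h]; simp
    have hμbd : ∀ X ∈ K, 0 ≤ μ X ∧ μ X ≤ 1 := by
      intro X hX
      rw [hK] at hX
      rcases mem_insert.1 hX with rfl | hX
      · rw [hμ0]; norm_num
      rcases mem_insert.1 hX with rfl | hX
      · rw [hμW]; norm_num
      obtain ⟨a, _, rfl⟩ := mem_image.1 hX
      rw [hμT]; exact hB a
    have h0K : (∅ : Finset (LatticeHom L Bool)) ∈ K := by rw [hK]; exact mem_insert_self _ _
    have hWK : W' ∈ K := by rw [hK]; exact mem_insert.2 (Or.inr (mem_insert_self _ _))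
    have hTK : ∀ a : L, T a ∈ K := by
      intro a
      rw [hK]
      exact mem_insert.2 (Or.inr (mem_insert.2 (Or.inr (mem_image.2 ⟨a, mem_univ a, rfl⟩))))
    have hKcases : ∀ X ∈ K, X = ∅ ∨ X = W' ∨ ∃ a : L, T a = X := by
      intro X hX
      rw [hK] at hX
      rcases mem_insert.1 hX with rfl | hX
      · exact Or.inl rfl
      rcases mem_insert.1 hX with rfl | hX
      · exact Or.inr (Or.inl rfl)
      obtain ⟨a, _, rfl⟩ := mem_image.1 hX
      exact Or.inr (Or.inr ⟨a, rfl⟩)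
    have hsubW : ∀ X ∈ K, X ⊆ W' := by
      intro X hX
      rcases hKcases X hX with rfl | rfl | ⟨a, rfl⟩
      · exact empty_subset _
      · exact Subset.refl _
      · rw [hT]; exact filter_subset _ _
    have hTsup : ∀ a b : L, T a ∪ T b = T (a ⊔ b) := by
      intro a b
      ext w
      simp only [mem_union, hTmem, map_sup]
      cases hA : w a <;> cases hB' : w b <;> simp [hA, hB']
    have hTinf : ∀ a b : L, T a ∩ T b = T (a ⊓ b) := by
      intro a b
      ext w
      simp only [mem_inter, hTmem, map_inf]
      cases hA : w a <;> cases hB' : w b <;> simp [hA, hB']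
    have hunion : ∀ X ∈ K, ∀ Y ∈ K, X ∪ Y ∈ K := by
      intro X hX Y hY
      rcases hKcases X hX with rfl | rfl | ⟨a, rfl⟩
      · rwa [empty_union]
      · rw [union_eq_left.2 (hsubW Y hY)]; exact hWK
      rcases hKcases Y hY with rfl | rfl | ⟨b, rfl⟩
      · rwa [union_empty]
      · rw [union_eq_right.2 (hsubW _ (hTK a))]; exact hWK
      · rw [hTsup]; exact hTK _
    have hinter : ∀ X ∈ K, ∀ Y ∈ K, X ∩ Y ∈ K := by
      intro X hX Y hY
      rcases hKcases X hX with rfl | rfl | ⟨a, rfl⟩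
      · rw [empty_inter]; exact h0K
      · rwa [inter_eq_right.2 (hsubW Y hY)]
      rcases hKcases Y hY with rfl | rfl | ⟨b, rfl⟩
      · rw [inter_empty]; exact h0K
      · rw [inter_eq_left.2 (hsubW _ (hTK a))]; exact hTK a
      · rw [hTinf]; exact hTK _
    have hmono : ∀ X ∈ K, ∀ Y ∈ K, X ⊆ Y → μ X ≤ μ Y := by
      intro X hX Y hY hss
      rcases hKcases X hX with rfl | rfl | ⟨a, rfl⟩
      · rw [hμ0]; exact (hμbd Y hY).1
      · have : Y = W' := Subset.antisymm (hsubW Y hY) hss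
        rw [this]
      rcases hKcases Y hY with rfl | rfl | ⟨b, rfl⟩
      · have : T a = ∅ := subset_empty.1 hss
        rw [this]
      · rw [hμW]; exact (hμbd _ (hTK a)).2
      · rw [hμT, hμT]; exact hTeqB a b hss
    have hmod : ∀ X ∈ K, ∀ Y ∈ K, μ (X ∪ Y) + μ (X ∩ Y) = μ X + μ Y := by
      intro X hX Y hY
      rcases hKcases X hX with rfl | rfl | ⟨a, rfl⟩
      · rw [empty_union, empty_inter, hμ0]; try ring
      · rw [union_eq_left.2 (hsubW Y hY), inter_eq_right.2 (hsubW Y hY)]; try ring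
      rcases hKcases Y hY with rfl | rfl | ⟨b, rfl⟩
      · rw [union_empty, inter_empty, hμ0]; try ring
      · rw [union_eq_right.2 (hsubW _ (hTK a)), inter_eq_left.2 (hsubW _ (hTK a))]
        try ring
      · rw [hTsup, hTinf, hμT, hμT, hμT, hμT]
        exact hL3 a b
    have hsep : ∀ u ∈ W', ∀ v ∈ W', u ≠ v →
        ∃ X ∈ K, (u ∈ X ∧ v ∉ X) ∨ (v ∈ X ∧ u ∉ X) := by
      intro u hu v hv huv
      have : ∃ a : L, u a ≠ v a := by
        by_contra hcon
        push_neg at hcon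
        exact huv (LatticeHom.ext hcon)
      obtain ⟨a, ha⟩ := this
      refine ⟨T a, hTK a, ?_⟩
      cases hua : u a <;> cases hva : v a
      · rw [hua, hva] at ha; exact absurd rfl ha
      · refine Or.inr ⟨(hTmem a v).2 ⟨(hW'mem v).1 hv, hva⟩, fun hmem => ?_⟩
        have h2 := ((hTmem a u).1 hmem).2
        rw [hua] at h2
        exact Bool.noConfusion h2
      · refine Or.inl ⟨(hTmem a u).2 ⟨(hW'mem u).1 hu, hua⟩, fun hmem => ?_⟩
        have h2 := ((hTmem a v).1 hmem).2
        rw [hva] at h2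
        exact Bool.noConfusion h2
      · rw [hua, hva] at ha; exact absurd rfl ha
    obtain ⟨lam, hlam0, hlam⟩ := paris_ext_meas W'.card W' K μ rfl hsubW h0K hWK hunion
      hinter hμ0 hmono hmod hsep
    have hsum1 : ∑ w ∈ W', lam w = 1 := by rw [hlam W' hWK, hμW]
    have hBsum : ∀ a : L, B a = ∑ w ∈ W', lam w * (if w a then (1:ℝ) else 0) := by
      intro a
      have h0 : ∑ w ∈ T a, lam w = B a := by rw [hlam (T a) (hTK a), hμT]
      have h1 : ∑ w ∈ T a, lam w = ∑ w ∈ W', (if w a = true then lam w else 0) := by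
        simp only [hT]
        exact Finset.sum_filter _ _
      rw [← h0, h1]
      apply Finset.sum_congr rfl
      intro w _
      split_ifs <;> ring
    have hBeq : B = W'.centerMass lam (fun w => fun a => if w a then (1:ℝ) else 0) := by
      rw [Finset.centerMass, hsum1, inv_one, one_smul]
      funext a
      rw [Finset.sum_apply]
      simp only [Pi.smul_apply, smul_eq_mul]
      exact hBsum a
    rw [hBeq]
    apply Finset.centerMass_mem_convexHull
    · intro i _; exact hlam0 i
    · rw [hsum1]; norm_num
    · intro i hi
      exact ⟨i, (hW'mem i).1 hi, rfl⟩
end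

section
/- Let W be a type and let a, b : W → ℝ be functions whose values lie in {0, 1/2, 1}. Define KL(f, g) := ∀ w, f w = 1 → g w = 1, and SL(f, g) := ∀ w, (f w = 1 → g w = 1) ∧ (f w = 1/2 → g w ≠ 0). Then SL(a, b) holds if and only if both KL(a, b) and KL(fun w => 1 − b w, fun w => 1 − a w) hold. -/
theorem SL_iff_KL_and_contraposed_KL
    {W : Type*} (a b : W → ℝ)
    (ha : ∀ w, a w = 0 ∨ a w = 1/2 ∨ a w = 1)
    (hb : ∀ w, b w = 0 ∨ b w = 1/2 ∨ b w = 1) :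
    (∀ w, (a w = 1 → b w = 1) ∧ (a w = 1/2 → b w ≠ 0)) ↔
      ((∀ w, a w = 1 → b w = 1) ∧
       (∀ w, (fun w => 1 - b w) w = 1 → (fun w => 1 - a w) w = 1)) := by
  constructor
  · intro h
    refine ⟨fun w => (h w).1, fun w hw => ?_⟩
    simp only at hw ⊢
    rcases ha w with h1 | h1 | h1 <;> rcases hb w with h2 | h2 | h2 <;>
      first
        | linarith
        | (exact absurd h2 ((h w).2 h1))
        | linarith [(h w).1 h1]
  · rintro ⟨h1, h2⟩ w
    refine ⟨h1 w, fun hw hb0 => ?_⟩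
    have := h2 w (by simp [hb0])
    simp at this
    rw [hw] at this; norm_num at this
end
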